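/- arXiv:2205.15102 — 4 statements merged into one kernel-verified Lean document; each statement's English description precedes it below -/
import Mathlib

section
/- Suppose each row (X_{1,n},…,X_{k(n),n}) of the array is associated with X_{k,n} ~ Bernoulli(p_{k,n}), and, writing p̄_n = sup_{1≤k≤k(n)} p_{k,n} and X'_{h,j,n} = X_{(j−1)ℓ(n)+h,n}, assume: (2a) p̄_n → 0; (2b) Σ_{k=1}^{k(n)} p_{k,n} → λ for some λ > 0; (2c) k(n)·p̄_n² → 0; (2d) k(n)²·sup_{1≤r≠s≤k(n)} Cov(X_{r,n}, X_{s,n}) → 0; (3) Σ_{h=1}^{r(n)} p_{m(n)ℓ(n)+h,n} → 0; (4a) m(n)·sup_{1≤j≤m(n)} Σ_{1≤r≠s≤ℓ(n)} Cov(X'_{r,j,n}, X'_{s,j,n}) → 0; (4b) Σ_{1≤r≠s≤r(n)} Cov(X_{m(n)ℓ(n)+r,n}, X_{m(n)ℓ(n)+s,n}) → 0. Then S_n[X] converges in distribution to the Poisson(λ) law. (Theorem 4.3 / conv_Bern_Pois_Gen) -/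
open MeasureTheory ProbabilityTheory Filter Finset Topology

noncomputable section

/-- The covariance `Cov(X, Y) = E[XY] - E[X]E[Y]` of two real random variables. -/
def rcov {Ω : Type*} [MeasurableSpace Ω] (P : Measure Ω) (X Y : Ω → ℝ) : ℝ :=
  ∫ ω, X ω * Y ω ∂P - (∫ ω, X ω ∂P) * (∫ ω, Y ω ∂P)

/-- A finite family `(X 0, ..., X (m-1))` of real random variables is *associated*:
for every pair of bounded, measurable, coordinatewise nondecreasing functions
`f, g : ℝ^m → ℝ`, `Cov(f(X), g(X)) ≥ 0`. -/
def AssociatedRVs {Ω : Type*} [MeasurableSpace Ω] (P : Measure Ω) {m : ℕ}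
    (X : Fin m → Ω → ℝ) : Prop :=
  ∀ f g : (Fin m → ℝ) → ℝ, Measurable f → Measurable g →
    (∃ C, ∀ x, |f x| ≤ C) → (∃ C, ∀ x, |g x| ≤ C) →
    Monotone f → Monotone g →
    0 ≤ rcov P (fun ω => f (fun i => X i ω)) (fun ω => g (fun i => X i ω))

/-- Convergence in distribution of a sequence of real random variables to a law `μ` on `ℝ`:
integrals of every bounded continuous function converge. -/
def TendstoInDistribution {Ω : Type*} [MeasurableSpace Ω] (P : Measure Ω)
    (X : ℕ → Ω → ℝ) (μ : Measure ℝ) : Prop :=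
  ∀ f : BoundedContinuousFunction ℝ ℝ,
    Tendsto (fun n => ∫ ω, f (X n ω) ∂P) atTop (𝓝 (∫ x, f x ∂μ))

/-- The Poisson law with mean `l`, as a measure on `ℝ`: `P({j}) = e^(-l) l^j / j!`. -/
def poissonLaw (l : ℝ) : Measure ℝ :=
  Measure.sum fun j : ℕ =>
    ENNReal.ofReal (Real.exp (-l) * l ^ j / (Nat.factorial j)) • Measure.dirac (j : ℝ)

/-- The Binomial(n, p) law, as a measure on `ℝ`: `P({j}) = C(n,j) p^j (1-p)^(n-j)`. -/
def binomialLaw (n : ℕ) (p : ℝ) : Measure ℝ :=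
  Measure.sum fun j : ℕ =>
    ENNReal.ofReal ((n.choose j) * p ^ j * (1 - p) ^ (n - j)) • Measure.dirac (j : ℝ)

/-- The Bernoulli(p) law, as a measure on `ℝ`: `P({1}) = p`, `P({0}) = 1 - p`. -/
def bernoulliLaw (p : ℝ) : Measure ℝ :=
  ENNReal.ofReal (1 - p) • Measure.dirac (0 : ℝ) + ENNReal.ofReal p • Measure.dirac (1 : ℝ)

/-- The negative binomial law `NB(k, p)`, the law of a sum of `k` i.i.d. Geometric(p)
variables (on `{1, 2, ...}`): `P({j}) = C(j-1, k-1) p^k (1-p)^(j-k)` for `j ≥ k`. -/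
def negBinomialLaw (k : ℕ) (p : ℝ) : Measure ℝ :=
  Measure.sum fun j : ℕ =>
    ENNReal.ofReal (if k ≤ j then ((j - 1).choose (k - 1)) * p ^ k * (1 - p) ^ (j - k) else 0)
      • Measure.dirac (j : ℝ)

/-- The corrected geometric law of parameter `p` (the law of `Z - 1` where `Z` is
Geometric(p) on `{1, 2, ...}`): `P({j}) = p (1-p)^j` for `j ∈ ℕ`. -/
def correctedGeomLaw (p : ℝ) : Measure ℝ :=
  Measure.sum fun j : ℕ => ENNReal.ofReal (p * (1 - p) ^ j) • Measure.dirac (j : ℝ)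

/-- A row `(X 0, ..., X (K-1))` is (strictly) stationary: for every `t ≥ 1` and `s`
with `s + t ≤ K`, `(X t, ..., X (s+t-1))` has the same joint law as `(X 0, ..., X (s-1))`. -/
def RowStationary {Ω : Type*} [MeasurableSpace Ω] (P : Measure Ω) (K : ℕ)
    (X : ℕ → Ω → ℝ) : Prop :=
  ∀ s t : ℕ, 1 ≤ t → s + t ≤ K →
    Measure.map (fun ω (i : Fin s) => X (t + i) ω) P
      = Measure.map (fun ω (i : Fin s) => X (i : ℕ) ω) P

/-- Characteristic function `φ_X(u) = E[exp(iuX)]` of a real random variable. -/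
def charRV {Ω : Type*} [MeasurableSpace Ω] (P : Measure Ω) (X : Ω → ℝ) (u : ℝ) : ℂ :=
  ∫ ω, Complex.exp (Complex.I * u * X ω) ∂P

/-!
Off a null set the row sum `S_n` is a natural number, and for `z ∈ (0, 1)` its generating
function is `E[z ^ S_n] = E[∏ₖ (1 - (1 - z) X_{k,n})]`. Association makes the covariance of two
nondecreasing (or two nonincreasing) functions of the row nonnegative; applied to the partial
products and to `∏ᵢ (1 - (1 - z) xᵢ) + (1 - z) ∑ᵢ xᵢ`, it gives Newman's inequality
`0 ≤ E[∏ₖ (1 - (1 - z) X_{k,n})] - ∏ₖ (1 - (1 - z) p_{k,n}) ≤ ∑_{r ≠ s} Cov(X_{r,n}, X_{s,n})`,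
which is at most `k(n)² sup Cov → 0` by (2d). The product differs from
`exp(-(1 - z) ∑ₖ p_{k,n})` by at most `∑ₖ p_{k,n}² ≤ k(n) p̄_n² → 0` by (2c), and the exponential
tends to `exp(-(1 - z) λ)` by (2b). Convergence of the generating functions on `(0, 1)` gives
convergence of the point masses, and Scheffé's lemma upgrades it to convergence in total
variation, hence in distribution.
-/

section Covariance

variable {Ω : Type*} [MeasurableSpace Ω] {P : Measure Ω} [IsProbabilityMeasure P]

lemma rcov_eq_covariance {X Y : Ω → ℝ} (hX : MemLp X 2 P) (hY : MemLp Y 2 P) :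
    rcov P X Y = cov[X, Y; P] := by
  rw [covariance_eq_sub hX hY]
  rfl

omit [IsProbabilityMeasure P] in
lemma rcov_congr_ae {X X' Y Y' : Ω → ℝ} (hX : X =ᵐ[P] X') (hY : Y =ᵐ[P] Y') :
    rcov P X Y = rcov P X' Y' := by
  have hXY : (fun ω => X ω * Y ω) =ᵐ[P] fun ω => X' ω * Y' ω := hX.mul hY
  simp only [rcov, integral_congr_ae hX, integral_congr_ae hY, integral_congr_ae hXY]

variable {K : ℕ} {Y : Fin K → Ω → ℝ}

lemma memLp_comp_of_ae_mem_Icc (hY : ∀ i, Measurable (Y i))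
    (h01 : ∀ᵐ ω ∂P, (fun i => Y i ω) ∈ Set.Icc 0 1) {f : (Fin K → ℝ) → ℝ} (hf : Continuous f)
    (p : ENNReal) : MemLp (fun ω => f fun i => Y i ω) p P := by
  obtain ⟨C, hC⟩ := isCompact_Icc.exists_bound_of_continuousOn hf.continuousOn
  exact MemLp.of_bound (hf.measurable.comp (measurable_pi_lambda _ hY)).aestronglyMeasurable C
    (h01.mono fun ω h => hC _ h)

lemma integral_apply_mem_Icc (hY : ∀ i, Measurable (Y i))
    (h01 : ∀ᵐ ω ∂P, (fun i => Y i ω) ∈ Set.Icc 0 1) (i : Fin K) :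
    ∫ ω, Y i ω ∂P ∈ Set.Icc (0 : ℝ) 1 :=
  ⟨integral_nonneg_of_ae (h01.mono fun ω h => h.1 i), by
    simpa using integral_mono_ae
      ((memLp_comp_of_ae_mem_Icc hY h01 (continuous_apply i) 1).integrable le_rfl)
      (integrable_const 1) (h01.mono fun ω h => h.2 i)⟩

/-- Association only involves bounded test functions, so a function continuous and monotone on
the cube is first composed with the projection onto the cube. -/
theorem AssociatedRVs.covariance_nonneg (hA : AssociatedRVs P Y) (hY : ∀ i, Measurable (Y i))
    (h01 : ∀ᵐ ω ∂P, (fun i => Y i ω) ∈ Set.Icc 0 1) {f g : (Fin K → ℝ) → ℝ}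
    (hf : Continuous f) (hg : Continuous g)
    (hfm : MonotoneOn f (Set.Icc 0 1)) (hgm : MonotoneOn g (Set.Icc 0 1)) :
    0 ≤ cov[fun ω => f fun i => Y i ω, fun ω => g fun i => Y i ω; P] := by
  set π : (Fin K → ℝ) → Fin K → ℝ := fun x i => max 0 (min (x i) 1)
  have hπ : Continuous π := continuous_pi fun i => by fun_prop
  have hπmem : ∀ x, π x ∈ Set.Icc 0 1 := fun x =>
    ⟨fun i => le_max_left _ _, fun i => max_le zero_le_one (min_le_right _ _)⟩
  have hπmono : Monotone π := fun x y hxy i => max_le_max le_rfl (min_le_min (hxy i) le_rfl)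
  have hclamp : ∀ h : (Fin K → ℝ) → ℝ, Continuous h → MonotoneOn h (Set.Icc 0 1) →
      Measurable (fun x => h (π x)) ∧ (∃ C, ∀ x, |h (π x)| ≤ C) ∧ Monotone fun x => h (π x) := by
    intro h hc hm
    obtain ⟨C, hC⟩ := isCompact_Icc.exists_bound_of_continuousOn hc.continuousOn
    exact ⟨(hc.comp hπ).measurable, ⟨C, fun x => hC _ (hπmem x)⟩,
      fun x y hxy => hm (hπmem x) (hπmem y) (hπmono hxy)⟩
  obtain ⟨hfm', hfb, hfmono⟩ := hclamp f hf hfm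
  obtain ⟨hgm', hgb, hgmono⟩ := hclamp g hg hgm
  have hproj : ∀ᵐ ω ∂P, (π fun i => Y i ω) = fun i => Y i ω := h01.mono fun ω h => by
    funext i
    exact (max_eq_right (le_min (h.1 i) zero_le_one)).trans (min_eq_left (h.2 i))
  have key := hA _ _ hfm' hgm' hfb hgb hfmono hgmono
  rwa [rcov_congr_ae (hproj.mono fun ω h => congrArg f h) (hproj.mono fun ω h => congrArg g h),
    rcov_eq_covariance (memLp_comp_of_ae_mem_Icc hY h01 hf 2)
      (memLp_comp_of_ae_mem_Icc hY h01 hg 2)] at key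

end Covariance

section Elementary

lemma abs_prod_sub_prod_le_sum_abs_sub {ι : Type*} (s : Finset ι) {a b : ι → ℝ}
    (ha : ∀ i ∈ s, |a i| ≤ 1) (hb : ∀ i ∈ s, |b i| ≤ 1) :
    |∏ i ∈ s, a i - ∏ i ∈ s, b i| ≤ ∑ i ∈ s, |a i - b i| := by
  classical
  induction s using Finset.induction_on with
  | empty => simp
  | insert k s hk ih =>
    simp only [Finset.mem_insert, forall_eq_or_imp] at ha hb
    rw [prod_insert hk, prod_insert hk, sum_insert hk]
    have hbs : |∏ i ∈ s, b i| ≤ 1 := by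
      rw [abs_prod]
      exact prod_le_one (fun i _ => abs_nonneg _) hb.2
    calc |a k * ∏ i ∈ s, a i - b k * ∏ i ∈ s, b i|
        = |a k * (∏ i ∈ s, a i - ∏ i ∈ s, b i) + (a k - b k) * ∏ i ∈ s, b i| := by ring_nf
      _ ≤ |a k| * |∏ i ∈ s, a i - ∏ i ∈ s, b i| + |a k - b k| * |∏ i ∈ s, b i| := by
        rw [← abs_mul, ← abs_mul]
        exact abs_add_le _ _
      _ ≤ 1 * ∑ i ∈ s, |a i - b i| + |a k - b k| * 1 := by
        gcongr
        · exact ha.1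
        · exact ih ha.2 hb.2
      _ = |a k - b k| + ∑ i ∈ s, |a i - b i| := by ring

lemma one_sub_mul_mem_Icc {c t : ℝ} (hc : c ∈ Set.Icc (0 : ℝ) 1) (ht : t ∈ Set.Icc (0 : ℝ) 1) :
    1 - c * t ∈ Set.Icc (0 : ℝ) 1 :=
  ⟨by nlinarith [ht.2, hc.1, hc.2], by nlinarith [ht.1, hc.1]⟩

lemma abs_le_one_of_mem_Icc {t : ℝ} (ht : t ∈ Set.Icc (0 : ℝ) 1) : |t| ≤ 1 :=
  abs_le.2 ⟨by linarith [ht.1], ht.2⟩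

lemma abs_prod_one_sub_sub_exp_neg_sum_le {ι : Type*} (s : Finset ι) {t : ι → ℝ}
    (ht : ∀ i ∈ s, t i ∈ Set.Icc (0 : ℝ) 1) :
    |∏ i ∈ s, (1 - t i) - Real.exp (-∑ i ∈ s, t i)| ≤ ∑ i ∈ s, t i ^ 2 := by
  rw [← sum_neg_distrib, Real.exp_sum]
  refine (abs_prod_sub_prod_le_sum_abs_sub s
    (fun i hi => abs_le_one_of_mem_Icc ⟨by linarith [(ht i hi).2], by linarith [(ht i hi).1]⟩)
    (fun i hi => by
      rw [abs_of_pos (Real.exp_pos _), Real.exp_le_one_iff]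
      linarith [(ht i hi).1])).trans (sum_le_sum fun i hi => ?_)
  rw [show 1 - t i - Real.exp (-t i) = -(Real.exp (-t i) - 1 - -t i) by ring, abs_neg, ← neg_sq]
  exact Real.abs_exp_sub_one_sub_id_le (by rw [abs_neg]; exact abs_le_one_of_mem_Icc (ht i hi))

lemma sum_sum_ite_ne_insert {ι M : Type*} [DecidableEq ι] [AddCommMonoid M] {s : Finset ι}
    {k : ι} (hk : k ∉ s) (f : ι → ι → M) :
    ∑ r ∈ insert k s, ∑ t ∈ insert k s, (if r ≠ t then f r t else 0)
      = ∑ r ∈ s, ∑ t ∈ s, (if r ≠ t then f r t else 0) + (∑ t ∈ s, f k t + ∑ r ∈ s, f r k) := by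
  have hne : ∀ i ∈ s, i ≠ k := fun i hi h => hk (h ▸ hi)
  rw [sum_insert hk, sum_insert hk, sum_congr rfl fun r hr => sum_insert hk]
  simp only [ne_eq, not_true_eq_false, if_false, zero_add, sum_add_distrib]
  rw [sum_congr rfl fun t ht => if_pos (hne t ht).symm,
    sum_congr rfl fun r hr => if_pos (hne r hr)]
  abel

lemma exists_sum_eq_natCast_and_prod_eq_pow {ι : Type*} (s : Finset ι) {x : ι → ℝ}
    (hx : ∀ i ∈ s, x i = 0 ∨ x i = 1) :
    ∃ m : ℕ, ∑ i ∈ s, x i = m ∧ ∀ z : ℝ, ∏ i ∈ s, (1 - (1 - z) * x i) = z ^ m := by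
  classical
  induction s using Finset.induction_on with
  | empty => exact ⟨0, by simp, fun z => by simp⟩
  | insert k s hk ih =>
    simp only [Finset.mem_insert, forall_eq_or_imp] at hx
    obtain ⟨m, hsum, hprod⟩ := ih hx.2
    rcases hx.1 with h | h
    · exact ⟨m, by rw [sum_insert hk, h, hsum, zero_add], fun z => by
        rw [prod_insert hk, h, hprod]
        ring⟩
    · exact ⟨m + 1, by rw [sum_insert hk, h, hsum]; push_cast; ring, fun z => by
        rw [prod_insert hk, h, hprod]
        ring⟩

lemma le_iSup_mem_finset {ι : Type*} {f : ι → ℝ} {s : Finset ι} {i : ι} (hi : i ∈ s) :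
    f i ≤ ⨆ j ∈ s, f j := by
  have hbdd : BddAbove (Set.range fun j => ⨆ _ : j ∈ s, f j) := by
    refine ⟨∑ j ∈ s, |f j|, ?_⟩
    rintro _ ⟨j, rfl⟩
    exact Real.iSup_le (fun hj => (le_abs_self _).trans
      (single_le_sum (f := fun j => |f j|) (fun _ _ => abs_nonneg _) hj))
      (sum_nonneg fun _ _ => abs_nonneg _)
  calc f i = ⨆ _ : i ∈ s, f i := (ciSup_pos (f := fun _ => f i) hi).symm
    _ ≤ ⨆ j ∈ s, f j := le_ciSup hbdd i

lemma sum_ite_ne_le_sq_mul_iSup {K : ℕ} {f : ℕ → ℕ → ℝ}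
    (hf : ∀ r < K, ∀ s < K, r ≠ s → 0 ≤ f r s) :
    ∑ r : Fin K, ∑ s : Fin K, (if r ≠ s then f r s else 0)
      ≤ K ^ 2 * ⨆ r ∈ range K, ⨆ s ∈ range K, ⨆ _ : r ≠ s, f r s := by
  have hV : 0 ≤ ⨆ r ∈ range K, ⨆ s ∈ range K, ⨆ _ : r ≠ s, f r s :=
    Real.iSup_nonneg fun r => Real.iSup_nonneg fun hr => Real.iSup_nonneg fun s =>
      Real.iSup_nonneg fun hs => Real.iSup_nonneg fun hrs =>
        hf r (mem_range.1 hr) s (mem_range.1 hs) hrs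
  have hle : ∀ r s : Fin K, (if r ≠ s then f r s else 0)
      ≤ ⨆ r ∈ range K, ⨆ s ∈ range K, ⨆ _ : r ≠ s, f r s := by
    intro r s
    split_ifs with h
    · have hne : (r : ℕ) ≠ s := fun e => h (Fin.ext e)
      calc f r s = ⨆ _ : (r : ℕ) ≠ s, f r s := (ciSup_pos (f := fun _ => f r s) hne).symm
        _ ≤ ⨆ s' ∈ range K, ⨆ _ : (r : ℕ) ≠ s', f r s' :=
          le_iSup_mem_finset (f := fun s' => ⨆ _ : (r : ℕ) ≠ s', f r s') (mem_range.2 s.2)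
        _ ≤ _ := le_iSup_mem_finset (f := fun r' => ⨆ s' ∈ range K, ⨆ _ : r' ≠ s', f r' s')
          (mem_range.2 r.2)
    · exact hV
  calc _ ≤ ∑ r : Fin K, ∑ s : Fin K, ⨆ r ∈ range K, ⨆ s ∈ range K, ⨆ _ : r ≠ s, f r s :=
        sum_le_sum fun r _ => sum_le_sum fun s _ => hle r s
    _ = _ := by simp [sq, mul_assoc]

lemma sum_sq_le_mul_iSup_sq {K : ℕ} {p : ℕ → ℝ} (hp : ∀ k < K, 0 ≤ p k) :
    ∑ i : Fin K, p i ^ 2 ≤ K * (⨆ k ∈ range K, p k) ^ 2 :=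
  calc ∑ i : Fin K, p i ^ 2 ≤ ∑ _i : Fin K, (⨆ k ∈ range K, p k) ^ 2 :=
        sum_le_sum fun i _ => pow_le_pow_left₀ (hp i i.2) (le_iSup_mem_finset (mem_range.2 i.2)) 2
    _ = K * (⨆ k ∈ range K, p k) ^ 2 := by simp

end Elementary

namespace AssociatedRVs

variable {Ω : Type*} [MeasurableSpace Ω] {P : Measure Ω} [IsProbabilityMeasure P]
  {K : ℕ} {Y : Fin K → Ω → ℝ} {c : ℝ}
  (hA : AssociatedRVs P Y) (hY : ∀ i, Measurable (Y i))
  (h01 : ∀ᵐ ω ∂P, (fun i => Y i ω) ∈ Set.Icc 0 1)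

include hA hY h01

lemma covariance_apply_nonneg (i j : Fin K) : 0 ≤ cov[Y i, Y j; P] :=
  hA.covariance_nonneg hY h01 (f := fun x => x i) (g := fun x => x j) (continuous_apply i)
    (continuous_apply j) (fun _ _ _ _ h => h i) (fun _ _ _ _ h => h j)

lemma covariance_prod_one_sub_mul_nonneg (hc : c ∈ Set.Icc 0 1) (s : Finset (Fin K))
    (k : Fin K) :
    0 ≤ cov[fun ω => ∏ i ∈ s, (1 - c * Y i ω), fun ω => 1 - c * Y k ω; P] := by
  have h := hA.covariance_nonneg hY h01 (f := fun x => -∏ i ∈ s, (1 - c * x i))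
    (g := fun x => -(1 - c * x k)) (by fun_prop) (by fun_prop)
    (fun x hx y hy hxy => neg_le_neg <| prod_le_prod
      (fun i _ => (one_sub_mul_mem_Icc hc ⟨hy.1 i, hy.2 i⟩).1)
      fun i _ => by nlinarith [hxy i, hc.1])
    (fun x _ y _ hxy => by nlinarith [hxy k, hc.1])
  rwa [covariance_fun_neg_left, covariance_fun_neg_right, neg_neg] at h

/-- `∏ (1 - c xᵢ) + c ∑ xᵢ` is nondecreasing on the cube, so its covariance with the nonincreasing
`1 - c x_k` is nonpositive. -/
lemma covariance_prod_one_sub_mul_le (hc : c ∈ Set.Icc 0 1) (s : Finset (Fin K)) (k : Fin K) :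
    cov[fun ω => ∏ i ∈ s, (1 - c * Y i ω), fun ω => 1 - c * Y k ω; P]
      ≤ ∑ i ∈ s, cov[Y i, Y k; P] := by
  have hmono : MonotoneOn (fun x : Fin K → ℝ => ∏ i ∈ s, (1 - c * x i) + c * ∑ i ∈ s, x i)
      (Set.Icc 0 1) := by
    intro x hx y hy hxy
    have h := (le_abs_self _).trans (abs_prod_sub_prod_le_sum_abs_sub s
      (a := fun i => 1 - c * x i) (b := fun i => 1 - c * y i)
      (fun i _ => abs_le_one_of_mem_Icc (one_sub_mul_mem_Icc hc ⟨hx.1 i, hx.2 i⟩))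
      (fun i _ => abs_le_one_of_mem_Icc (one_sub_mul_mem_Icc hc ⟨hy.1 i, hy.2 i⟩)))
    have habs : ∑ i ∈ s, |1 - c * x i - (1 - c * y i)| = c * ∑ i ∈ s, y i - c * ∑ i ∈ s, x i := by
      rw [mul_sum, mul_sum, ← sum_sub_distrib]
      exact sum_congr rfl fun i _ => by
        rw [abs_of_nonneg (by nlinarith [hxy i, hc.1])]
        ring
    simp only at h ⊢
    linarith
  have h : 0 ≤ cov[fun ω => ∏ i ∈ s, (1 - c * Y i ω) + c * ∑ i ∈ s, Y i ω,
      fun ω => -(1 - c * Y k ω); P] :=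
    hA.covariance_nonneg hY h01 (g := fun x => -(1 - c * x k)) (by fun_prop) (by fun_prop) hmono
      (fun x _ y _ hxy => by nlinarith [hxy k, hc.1])
  have hL : ∀ i, MemLp (Y i) 2 P := fun i =>
    memLp_comp_of_ae_mem_Icc hY h01 (continuous_apply i) 2
  have hsplit : cov[fun ω => ∏ i ∈ s, (1 - c * Y i ω) + c * ∑ i ∈ s, Y i ω,
      fun ω => 1 - c * Y k ω; P]
      = cov[fun ω => ∏ i ∈ s, (1 - c * Y i ω), fun ω => 1 - c * Y k ω; P]
        + cov[fun ω => c * ∑ i ∈ s, Y i ω, fun ω => 1 - c * Y k ω; P] :=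
    covariance_add_left
      (memLp_comp_of_ae_mem_Icc hY h01 (f := fun x => ∏ i ∈ s, (1 - c * x i)) (by fun_prop) 2)
      (memLp_comp_of_ae_mem_Icc hY h01 (f := fun x => c * ∑ i ∈ s, x i) (by fun_prop) 2)
      (memLp_comp_of_ae_mem_Icc hY h01 (f := fun x => 1 - c * x k) (by fun_prop) 2)
  rw [covariance_fun_neg_right, hsplit, covariance_const_mul_left,
    covariance_fun_sum_left' (fun i _ => hL i)
      (memLp_comp_of_ae_mem_Icc hY h01 (f := fun x => 1 - c * x k) (by fun_prop) 2),
    sum_congr rfl fun i _ =>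
      covariance_const_sub_right (((hL k).integrable one_le_two).const_mul c) 1
        (Y := fun ω => c * Y k ω),
    sum_congr rfl fun i _ => congrArg Neg.neg (covariance_const_mul_right c), sum_neg_distrib,
    ← mul_sum] at h
  have hnn : 0 ≤ ∑ i ∈ s, cov[Y i, Y k; P] :=
    sum_nonneg fun i _ => covariance_apply_nonneg hA hY h01 i k
  nlinarith [mul_nonneg (sub_nonneg.2 (mul_le_one₀ hc.2 hc.1 hc.2)) hnn]

lemma integral_prod_one_sub_mul_sub_prod_mem_Icc (hc : c ∈ Set.Icc 0 1) (s : Finset (Fin K)) :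
    ∫ ω, ∏ i ∈ s, (1 - c * Y i ω) ∂P - ∏ i ∈ s, (1 - c * ∫ ω, Y i ω ∂P)
      ∈ Set.Icc 0 (∑ r ∈ s, ∑ t ∈ s, if r ≠ t then cov[Y r, Y t; P] else 0) := by
  induction s using Finset.induction_on with
  | empty => simp
  | insert k s hk ih =>
    have hint : Integrable (Y k) P :=
      (memLp_comp_of_ae_mem_Icc hY h01 (continuous_apply k) 1).integrable le_rfl
    have hw : 1 - c * ∫ ω, Y k ω ∂P ∈ Set.Icc 0 1 :=
      one_sub_mul_mem_Icc hc (integral_apply_mem_Icc hY h01 k)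
    have hstep : ∫ ω, ∏ i ∈ insert k s, (1 - c * Y i ω) ∂P
        = cov[fun ω => ∏ i ∈ s, (1 - c * Y i ω), fun ω => 1 - c * Y k ω; P]
          + (∫ ω, ∏ i ∈ s, (1 - c * Y i ω) ∂P) * (1 - c * ∫ ω, Y k ω ∂P) := by
      rw [covariance_eq_sub
        (memLp_comp_of_ae_mem_Icc hY h01 (f := fun x => ∏ i ∈ s, (1 - c * x i)) (by fun_prop) 2)
        (memLp_comp_of_ae_mem_Icc hY h01 (f := fun x => 1 - c * x k) (by fun_prop) 2),
        integral_sub (integrable_const 1) (hint.const_mul c), integral_const_mul]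
      simp only [prod_insert hk, Pi.mul_apply, mul_comm (1 - c * Y k _), integral_const,
        probReal_univ, smul_eq_mul]
      ring
    have hcomm : ∑ t ∈ s, cov[Y k, Y t; P] = ∑ r ∈ s, cov[Y r, Y k; P] :=
      sum_congr rfl fun t _ => covariance_comm _ _
    have hcov0 := covariance_prod_one_sub_mul_nonneg hA hY h01 hc s k
    have hcov1 := covariance_prod_one_sub_mul_le hA hY h01 hc s k
    have hsum0 : 0 ≤ ∑ r ∈ s, cov[Y r, Y k; P] :=
      sum_nonneg fun r _ => covariance_apply_nonneg hA hY h01 r k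
    rw [sum_sum_ite_ne_insert hk, prod_insert hk, hstep, hcomm]
    obtain ⟨ih0, ih1⟩ := ih
    constructor
    · nlinarith [mul_nonneg hw.1 ih0]
    · nlinarith [mul_nonneg (sub_nonneg.2 hw.2) ih0]

/-- Newman's inequality. -/
theorem abs_integral_prod_one_sub_mul_sub_prod_le (hc : c ∈ Set.Icc 0 1) :
    |∫ ω, ∏ i, (1 - c * Y i ω) ∂P - ∏ i, (1 - c * ∫ ω, Y i ω ∂P)|
      ≤ ∑ r, ∑ t, if r ≠ t then cov[Y r, Y t; P] else 0 := by
  obtain ⟨h0, h1⟩ := integral_prod_one_sub_mul_sub_prod_mem_Icc hA hY h01 hc univ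
  rwa [abs_of_nonneg h0]

theorem abs_integral_prod_one_sub_mul_sub_exp_le (hc : c ∈ Set.Icc 0 1) :
    |∫ ω, ∏ i, (1 - c * Y i ω) ∂P - Real.exp (-c * ∑ i, ∫ ω, Y i ω ∂P)|
      ≤ (∑ r, ∑ t, if r ≠ t then cov[Y r, Y t; P] else 0) + ∑ i, (∫ ω, Y i ω ∂P) ^ 2 := by
  have hq := integral_apply_mem_Icc hY h01
  have hnewman := abs_integral_prod_one_sub_mul_sub_prod_le hA hY h01 hc
  have hexp := abs_prod_one_sub_sub_exp_neg_sum_le univ (t := fun i => c * ∫ ω, Y i ω ∂P)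
    fun i _ => ⟨mul_nonneg hc.1 (hq i).1, mul_le_one₀ hc.2 (hq i).1 (hq i).2⟩
  rw [← mul_sum, ← neg_mul] at hexp
  have hsq : ∑ i, (c * ∫ ω, Y i ω ∂P) ^ 2 ≤ ∑ i, (∫ ω, Y i ω ∂P) ^ 2 :=
    sum_le_sum fun i _ => by
      rw [mul_pow]
      exact mul_le_of_le_one_left (sq_nonneg _) (pow_le_one₀ hc.1 hc.2)
  exact (abs_sub_le _ _ _).trans (add_le_add hnewman (hexp.trans hsq))

end AssociatedRVs

section PoissonLimit

lemma abs_tsum_mul_pow_sub_sum_range_le {a : ℕ → ℝ} (ha0 : ∀ j, 0 ≤ a j) (ha : HasSum a 1)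
    {z : ℝ} (hz : z ∈ Set.Icc (0 : ℝ) 1) (j : ℕ) :
    |∑' i, a i * z ^ i - ∑ i ∈ range j, a i * z ^ i| ≤ z ^ j := by
  have hpow : ∀ i, 0 ≤ z ^ i ∧ z ^ i ≤ 1 := fun i => ⟨pow_nonneg hz.1 i, pow_le_one₀ hz.1 hz.2⟩
  have hs : Summable fun i => a i * z ^ i := ha.summable.of_nonneg_of_le
    (fun i => mul_nonneg (ha0 i) (hpow i).1) fun i => mul_le_of_le_one_right (ha0 i) (hpow i).2
  have htail : ∑' i, a (i + j) ≤ 1 := by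
    have h := ha.summable.sum_add_tsum_nat_add j
    rw [ha.tsum_eq] at h
    linarith [sum_nonneg fun i (_ : i ∈ range j) => ha0 i]
  rw [← hs.sum_add_tsum_nat_add j, add_sub_cancel_left,
    abs_of_nonneg (tsum_nonneg fun i => mul_nonneg (ha0 _) (hpow _).1)]
  calc ∑' i, a (i + j) * z ^ (i + j) ≤ ∑' i, a (i + j) * z ^ j :=
        ((summable_nat_add_iff j).2 hs).tsum_le_tsum
          (fun i => mul_le_mul_of_nonneg_left (pow_le_pow_of_le_one hz.1 hz.2 (by omega))
            (ha0 _))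
          (((summable_nat_add_iff j).2 ha.summable).mul_right _)
    _ = (∑' i, a (i + j)) * z ^ j := tsum_mul_right
    _ ≤ z ^ j := mul_le_of_le_one_left (hpow j).1 htail

theorem tendsto_apply_of_tendsto_tsum_mul_pow {a : ℕ → ℕ → ℝ} {b : ℕ → ℝ}
    (ha0 : ∀ n j, 0 ≤ a n j) (ha : ∀ n, HasSum (a n) 1) (hb0 : ∀ j, 0 ≤ b j) (hb : HasSum b 1)
    (h : ∀ z ∈ Set.Ioo (0 : ℝ) 1,
      Tendsto (fun n => ∑' i, a n i * z ^ i) atTop (𝓝 (∑' i, b i * z ^ i)))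
    (j : ℕ) : Tendsto (fun n => a n j) atTop (𝓝 (b j)) := by
  induction j using Nat.strong_induction_on with
  | _ j ih =>
  have hbound : ∀ n, ∀ z ∈ Set.Ioo (0 : ℝ) 1, |a n j - b j| ≤ (|∑' i, a n i * z ^ i
      - ∑' i, b i * z ^ i| + ∑ i ∈ range j, |a n i - b i|) / z ^ j + 2 * z := by
    intro n z hz
    have hzj : 0 < z ^ j := pow_pos hz.1 j
    have hIcc : z ∈ Set.Icc (0 : ℝ) 1 := ⟨hz.1.le, hz.2.le⟩
    have hA := abs_le.1 (abs_tsum_mul_pow_sub_sum_range_le (ha0 n) (ha n) hIcc (j + 1))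
    have hB := abs_le.1 (abs_tsum_mul_pow_sub_sum_range_le hb0 hb hIcc (j + 1))
    rw [pow_succ] at hA hB
    have hinit : |∑ i ∈ range j, (a n i - b i) * z ^ i| ≤ ∑ i ∈ range j, |a n i - b i| :=
      (abs_sum_le_sum_abs _ _).trans <| sum_le_sum fun i _ => by
        rw [abs_mul, abs_of_nonneg (pow_nonneg hz.1.le i)]
        exact mul_le_of_le_one_right (abs_nonneg _) (pow_le_one₀ hz.1.le hz.2.le)
    have hsplit : (a n j - b j) * z ^ j = (∑' i, a n i * z ^ i - ∑' i, b i * z ^ i)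
        - (∑' i, a n i * z ^ i - ∑ i ∈ range (j + 1), a n i * z ^ i)
        + (∑' i, b i * z ^ i - ∑ i ∈ range (j + 1), b i * z ^ i)
        - ∑ i ∈ range j, (a n i - b i) * z ^ i := by
      simp only [sum_range_succ, sub_mul, sum_sub_distrib]
      ring
    have hD := le_abs_self (∑' i, a n i * z ^ i - ∑' i, b i * z ^ i)
    have hD' := neg_abs_le (∑' i, a n i * z ^ i - ∑' i, b i * z ^ i)
    have key : |(a n j - b j) * z ^ j| ≤ |∑' i, a n i * z ^ i - ∑' i, b i * z ^ i|
        + 2 * z * z ^ j + ∑ i ∈ range j, |a n i - b i| := by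
      rw [hsplit]
      exact abs_le.2 ⟨by linarith [(abs_le.1 hinit).2], by linarith [(abs_le.1 hinit).1]⟩
    rw [abs_mul, abs_of_pos hzj] at key
    rw [← sub_le_iff_le_add, le_div_iff₀ hzj, sub_mul]
    linarith
  rw [Metric.tendsto_nhds]
  intro ε hε
  set z := min (ε / 4) (1 / 2)
  have hz : z ∈ Set.Ioo (0 : ℝ) 1 :=
    ⟨lt_min (by positivity) (by norm_num), (min_le_right _ _).trans_lt (by norm_num)⟩
  have hgen : Tendsto (fun n => |∑' i, a n i * z ^ i - ∑' i, b i * z ^ i|) atTop (𝓝 0) := by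
    simpa using ((h z hz).sub_const (∑' i, b i * z ^ i)).abs
  have hinit : Tendsto (fun n => ∑ i ∈ range j, |a n i - b i|) atTop (𝓝 0) := by
    simpa using tendsto_finsetSum _ fun i hi => ((ih i (mem_range.1 hi)).sub_const (b i)).abs
  have hlim := (hgen.add hinit).div_const (z ^ j)
  rw [zero_add, zero_div] at hlim
  filter_upwards [(tendsto_order.1 hlim).2 (ε / 2) (by positivity)] with n hn
  rw [Real.dist_eq]
  calc |a n j - b j| ≤ _ := hbound n z hz
    _ < ε / 2 + 2 * (ε / 4) := add_lt_add_of_lt_of_le hn (by gcongr; exact min_le_left _ _)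
    _ = ε := by ring

/-- Scheffé's lemma. -/
theorem tendsto_tsum_abs_sub_of_tendsto {a : ℕ → ℕ → ℝ} {b : ℕ → ℝ}
    (ha0 : ∀ n j, 0 ≤ a n j) (ha : ∀ n, HasSum (a n) 1) (hb0 : ∀ j, 0 ≤ b j) (hb : HasSum b 1)
    (h : ∀ j, Tendsto (fun n => a n j) atTop (𝓝 (b j))) :
    Tendsto (fun n => ∑' j, |a n j - b j|) atTop (𝓝 0) := by
  have hle : ∀ n j, max (b j - a n j) 0 ≤ b j := fun n j => max_le (by linarith [ha0 n j]) (hb0 j)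
  have hpos : ∀ n, Summable fun j => max (b j - a n j) 0 := fun n =>
    hb.summable.of_nonneg_of_le (fun j => le_max_right _ _) (hle n)
  have hsplit : ∀ n, ∑' j, |a n j - b j| = 2 * ∑' j, max (b j - a n j) 0 := by
    intro n
    have habs : (fun j => |a n j - b j|) = fun j => (a n j - b j) + 2 * max (b j - a n j) 0 := by
      ext j
      rcases le_total (b j) (a n j) with hj | hj
      · rw [abs_of_nonneg (by linarith), max_eq_right (by linarith)]
        ring
      · rw [abs_of_nonpos (by linarith), max_eq_left (by linarith)]
        ring
    rw [habs, ((ha n).sub hb).summable.tsum_add ((hpos n).mul_left 2), ((ha n).sub hb).tsum_eq,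
      tsum_mul_left, sub_self, zero_add]
  have hdom : Tendsto (fun n => ∑' j, max (b j - a n j) 0) atTop (𝓝 (∑' j, max (b j - b j) 0)) :=
    tendsto_tsum_of_dominated_convergence hb.summable
      (fun j => (tendsto_const_nhds.sub (h j)).max tendsto_const_nhds)
      (Eventually.of_forall fun n j => by
        rw [Real.norm_eq_abs, abs_of_nonneg (le_max_right _ _)]
        exact hle n j)
  simp only [sub_self, max_self, tsum_zero] at hdom
  simpa [hsplit] using hdom.const_mul 2

theorem tendsto_tsum_mul_of_tendsto {a : ℕ → ℕ → ℝ} {b : ℕ → ℝ}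
    (ha0 : ∀ n j, 0 ≤ a n j) (ha : ∀ n, HasSum (a n) 1) (hb0 : ∀ j, 0 ≤ b j) (hb : HasSum b 1)
    (h : ∀ j, Tendsto (fun n => a n j) atTop (𝓝 (b j))) {g : ℕ → ℝ} {C : ℝ}
    (hg : ∀ j, |g j| ≤ C) :
    Tendsto (fun n => ∑' j, a n j * g j) atTop (𝓝 (∑' j, b j * g j)) := by
  have hsum : ∀ {c : ℕ → ℝ}, Summable c → Summable fun j => c j * g j := fun hc =>
    (hc.abs.mul_right C).of_norm_bounded fun j => by
      rw [Real.norm_eq_abs, abs_mul]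
      exact mul_le_mul_of_nonneg_left (hg j) (abs_nonneg _)
  have hdiff : ∀ n, Summable fun j => |a n j - b j| := fun n =>
    ((ha n).summable.sub hb.summable).abs
  rw [tendsto_iff_dist_tendsto_zero]
  refine squeeze_zero (fun n => dist_nonneg) (fun n => ?_)
    (by simpa using (tendsto_tsum_abs_sub_of_tendsto ha0 ha hb0 hb h).mul_const C)
  rw [Real.dist_eq, ← (hsum (ha n).summable).tsum_sub (hsum hb.summable), ← tsum_mul_right]
  have hab : Summable fun j => (a n j - b j) * g j := hsum ((ha n).summable.sub hb.summable)
  calc |∑' j, (a n j * g j - b j * g j)| = ‖∑' j, (a n j - b j) * g j‖ := by simp_rw [sub_mul]; rfl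
    _ ≤ ∑' j, ‖(a n j - b j) * g j‖ := norm_tsum_le_tsum_norm hab.norm
    _ ≤ ∑' j, |a n j - b j| * C := hab.norm.tsum_le_tsum (fun j => by
        rw [Real.norm_eq_abs, abs_mul]
        exact mul_le_mul_of_nonneg_left (hg j) (abs_nonneg _)) ((hdiff n).mul_right C)

end PoissonLimit

section PoissonLaw

lemma hasSum_poisson_mul_pow (lam z : ℝ) :
    HasSum (fun j : ℕ => Real.exp (-lam) * lam ^ j / j.factorial * z ^ j)
      (Real.exp (-(1 - z) * lam)) := by
  have h := (NormedSpace.expSeries_div_hasSum_exp (lam * z)).mul_left (Real.exp (-lam))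
  rw [← Real.exp_eq_exp_ℝ, ← Real.exp_add] at h
  rw [show -(1 - z) * lam = -lam + lam * z by ring]
  refine h.congr_fun fun j => ?_
  ring

lemma integral_poissonLaw {lam : ℝ} (hlam : 0 ≤ lam) (f : ℝ → ℝ) :
    ∫ x, f x ∂poissonLaw lam = ∑' j : ℕ, Real.exp (-lam) * lam ^ j / j.factorial * f j := by
  rw [poissonLaw, integral_sum_dirac fun _ => ENNReal.ofReal_ne_top]
  congr with j
  rw [ENNReal.toReal_ofReal (by positivity), smul_eq_mul]

variable {Ω : Type*} [MeasurableSpace Ω] {P : Measure Ω}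

lemma TendstoInDistribution.congr_ae {X Y : ℕ → Ω → ℝ} {μ : Measure ℝ}
    (h : TendstoInDistribution P X μ) (hXY : ∀ n, X n =ᵐ[P] Y n) : TendstoInDistribution P Y μ := fun f =>
  (h f).congr fun n => integral_congr_ae <| (hXY n).mono fun ω hω => by rw [hω]

lemma integral_comp_eq_tsum [IsFiniteMeasure P] {N : Ω → ℕ} (hN : Measurable N) (f : ℕ → ℝ) :
    ∫ ω, f (N ω) ∂P = ∑' j, (P.map N).real {j} * f j := by
  rw [← integral_map hN.aemeasurable .of_discrete]
  nth_rewrite 1 [← Measure.sum_smul_dirac (P.map N)]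
  rw [integral_sum_dirac fun _ => measure_ne_top _ _]
  rfl

theorem tendstoInDistribution_poissonLaw_of_tendsto_integral_pow [IsProbabilityMeasure P]
    {N : ℕ → Ω → ℕ} (hN : ∀ n, Measurable (N n)) {lam : ℝ} (hlam : 0 ≤ lam)
    (h : ∀ z ∈ Set.Ioo (0 : ℝ) 1,
      Tendsto (fun n => ∫ ω, z ^ N n ω ∂P) atTop (𝓝 (Real.exp (-(1 - z) * lam)))) :
    TendstoInDistribution P (fun n ω => (N n ω : ℝ)) (poissonLaw lam) := by
  set a : ℕ → ℕ → ℝ := fun n j => (P.map (N n)).real {j}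
  set b : ℕ → ℝ := fun j => Real.exp (-lam) * lam ^ j / j.factorial
  have ha0 : ∀ n j, 0 ≤ a n j := fun n j => measureReal_nonneg
  have ha : ∀ n, HasSum (a n) 1 := fun n => by
    have h1 : ∑' j, a n j = 1 := by simpa using (integral_comp_eq_tsum (P := P) (hN n) 1).symm
    have hs : Summable (a n) := by
      by_contra hs
      rw [tsum_eq_zero_of_not_summable hs] at h1
      exact zero_ne_one h1
    exact h1 ▸ hs.hasSum
  have hb0 : ∀ j, 0 ≤ b j := fun j => by positivity
  have hb : HasSum b 1 := by simpa using hasSum_poisson_mul_pow lam 1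
  have hcoeff := tendsto_apply_of_tendsto_tsum_mul_pow ha0 ha hb0 hb fun z hz => by
    rw [(hasSum_poisson_mul_pow lam z).tsum_eq]
    exact (h z hz).congr fun n => integral_comp_eq_tsum (hN n) (z ^ ·)
  intro f
  rw [integral_poissonLaw hlam]
  exact (tendsto_tsum_mul_of_tendsto ha0 ha hb0 hb hcoeff (g := fun j => f j) (C := ‖f‖)
    fun j => (Real.norm_eq_abs _).symm.trans_le (f.norm_coe_le_norm _)).congr
      fun n => (integral_comp_eq_tsum (hN n) fun j => f j).symm

end PoissonLaw

section Bernoulli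

variable {Ω : Type*} [MeasurableSpace Ω] {P : Measure Ω} [IsProbabilityMeasure P]
  {Y : Ω → ℝ} {q : ℝ} (hY : Measurable Y) (hlaw : P.map Y = bernoulliLaw q)

include hY hlaw

lemma mem_Icc_of_map_eq_bernoulliLaw : q ∈ Set.Icc (0 : ℝ) 1 := by
  have h : bernoulliLaw q Set.univ = 1 := by
    rw [← hlaw, Measure.map_apply hY MeasurableSet.univ]
    simp
  simp only [bernoulliLaw, Measure.add_apply, Measure.smul_apply, measure_univ, smul_eq_mul,
    mul_one] at h
  exact ⟨by linarith [ENNReal.ofReal_le_one.1 (h ▸ le_self_add)],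
    ENNReal.ofReal_le_one.1 (h ▸ le_add_self)⟩

omit [IsProbabilityMeasure P] in
lemma ae_eq_zero_or_eq_one_of_map_eq_bernoulliLaw : ∀ᵐ ω ∂P, Y ω = 0 ∨ Y ω = 1 := by
  have hs : MeasurableSet ({0, 1} : Set ℝ)ᶜ := (Set.toFinite _).measurableSet.compl
  rw [ae_iff]
  change P (Y ⁻¹' ({0, 1} : Set ℝ)ᶜ) = 0
  rw [← Measure.map_apply hY hs, hlaw]
  simp [bernoulliLaw, Measure.dirac_apply' _ hs]

lemma integral_eq_of_map_eq_bernoulliLaw : ∫ ω, Y ω ∂P = q := by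
  rw [show ∫ ω, Y ω ∂P = ∫ x, x ∂(P.map Y) from
    (integral_map hY.aemeasurable aestronglyMeasurable_id).symm, hlaw, bernoulliLaw,
    integral_add_measure ((integrable_dirac enorm_lt_top).smul_measure ENNReal.ofReal_ne_top)
      ((integrable_dirac enorm_lt_top).smul_measure ENNReal.ofReal_ne_top),
    integral_smul_measure, integral_smul_measure, integral_dirac, integral_dirac,
    ENNReal.toReal_ofReal (mem_Icc_of_map_eq_bernoulliLaw hY hlaw).1]
  simp

end Bernoulli

theorem tendsto_integral_prod_one_sub_mul_of_associated {Ω : Type*} [MeasurableSpace Ω]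
    {P : Measure Ω} [IsProbabilityMeasure P] {X : ℕ → ℕ → Ω → ℝ} {kk : ℕ → ℕ}
    {p : ℕ → ℕ → ℝ} {lam c : ℝ}
    (hmeas : ∀ n k, Measurable (X n k))
    (hL2 : ∀ n, ∀ k < kk n, MemLp (X n k) 2 P)
    (hassoc : ∀ n, AssociatedRVs P (fun i : Fin (kk n) => X n (i : ℕ)))
    (hlaw : ∀ n, ∀ k < kk n, Measure.map (X n k) P = bernoulliLaw (p n k))
    (h2b : Tendsto (fun n => ∑ k ∈ range (kk n), p n k) atTop (𝓝 lam))
    (h2c : Tendsto (fun n => (kk n : ℝ) * (⨆ k ∈ range (kk n), p n k) ^ 2) atTop (𝓝 0))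
    (h2d : Tendsto (fun n => (kk n : ℝ) ^ 2 *
      ⨆ r ∈ range (kk n), ⨆ s ∈ range (kk n), ⨆ _ : r ≠ s, rcov P (X n r) (X n s))
      atTop (𝓝 0))
    (hc : c ∈ Set.Icc (0 : ℝ) 1) :
    Tendsto (fun n => ∫ ω, ∏ k ∈ range (kk n), (1 - c * X n k ω) ∂P) atTop
      (𝓝 (Real.exp (-c * lam))) := by
  have h01 : ∀ n, ∀ᵐ ω ∂P, (fun i : Fin (kk n) => X n i ω) ∈ Set.Icc 0 1 := fun n => by
    filter_upwards [ae_all_iff.2 fun i : Fin (kk n) =>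
      ae_eq_zero_or_eq_one_of_map_eq_bernoulliLaw (hmeas n i) (hlaw n i i.2)] with ω h
    exact ⟨fun i => by rcases h i with h | h <;> simp [h],
      fun i => by rcases h i with h | h <;> simp [h]⟩
  have hcov : ∀ n, ∀ r < kk n, ∀ s < kk n, cov[X n r, X n s; P] = rcov P (X n r) (X n s) :=
    fun n r hr s hs => (rcov_eq_covariance (hL2 n r hr) (hL2 n s hs)).symm
  have hbound : ∀ n, |∫ ω, ∏ k ∈ range (kk n), (1 - c * X n k ω) ∂P
      - Real.exp (-c * ∑ k ∈ range (kk n), p n k)|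
      ≤ (kk n : ℝ) ^ 2 * (⨆ r ∈ range (kk n), ⨆ s ∈ range (kk n), ⨆ _ : r ≠ s,
          rcov P (X n r) (X n s)) + (kk n : ℝ) * (⨆ k ∈ range (kk n), p n k) ^ 2 := by
    intro n
    have hp : ∀ k < kk n, ∫ ω, X n k ω ∂P = p n k := fun k hk =>
      integral_eq_of_map_eq_bernoulliLaw (hmeas n k) (hlaw n k hk)
    have h := (hassoc n).abs_integral_prod_one_sub_mul_sub_exp_le (fun i => hmeas n i) (h01 n) hc
    have hprod : ∫ ω, ∏ i : Fin (kk n), (1 - c * X n i ω) ∂P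
        = ∫ ω, ∏ k ∈ range (kk n), (1 - c * X n k ω) ∂P := by
      congr 1 with ω
      exact Fin.prod_univ_eq_prod_range (fun k => 1 - c * X n k ω) (kk n)
    simp only [fun i : Fin (kk n) => hp i i.2, fun r t : Fin (kk n) => hcov n r r.2 t t.2,
      Fin.sum_univ_eq_sum_range (p n), hprod] at h
    refine h.trans (add_le_add
      (sum_ite_ne_le_sq_mul_iSup (f := fun r s => rcov P (X n r) (X n s)) fun r hr s hs _ => ?_)
      (sum_sq_le_mul_iSup_sq (p := p n) fun k hk => (mem_Icc_of_map_eq_bernoulliLaw (hmeas n k)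
        (hlaw n k hk)).1))
    rw [← hcov n r hr s hs]
    exact (hassoc n).covariance_apply_nonneg (fun i => hmeas n i) (h01 n) ⟨r, hr⟩ ⟨s, hs⟩
  have hexp : Tendsto (fun n => Real.exp (-c * ∑ k ∈ range (kk n), p n k)) atTop
      (𝓝 (Real.exp (-c * lam))) :=
    (Real.continuous_exp.tendsto _).comp (h2b.const_mul (-c))
  have hdiff := squeeze_zero_norm (fun n => (Real.norm_eq_abs _).trans_le (hbound n))
    (by simpa only [add_zero] using h2d.add h2c)
  simpa using hdiff.add hexp

/-- Indices within a row are 0-based: `X n k` is `X_{k+1,n}`. -/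
theorem stmt_4_general {Ω : Type*} [MeasurableSpace Ω] (P : Measure Ω) [IsProbabilityMeasure P]
    (X : ℕ → ℕ → Ω → ℝ) (kk : ℕ → ℕ)
    (hmeas : ∀ n k, Measurable (X n k))
    (hL2 : ∀ n, ∀ k < kk n, MemLp (X n k) 2 P)
    (p : ℕ → ℕ → ℝ) (lam : ℝ) (hlam : 0 < lam)
    (hassoc : ∀ n, AssociatedRVs P (fun i : Fin (kk n) => X n (i : ℕ)))
    (hlaw : ∀ n, ∀ k < kk n, Measure.map (X n k) P = bernoulliLaw (p n k))
    (h2b : Tendsto (fun n => ∑ k ∈ Finset.range (kk n), p n k) atTop (𝓝 lam))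
    (h2c : Tendsto (fun n => (kk n : ℝ) * (⨆ k ∈ Finset.range (kk n), p n k) ^ 2)
      atTop (𝓝 0))
    (h2d : Tendsto
      (fun n => (kk n : ℝ) ^ 2 *
        ⨆ r ∈ Finset.range (kk n), ⨆ s ∈ Finset.range (kk n), ⨆ _ : r ≠ s,
          rcov P (X n r) (X n s))
      atTop (𝓝 0)) :
    TendstoInDistribution P (fun n ω => ∑ k ∈ Finset.range (kk n), X n k ω)
      (poissonLaw lam) := by
  have hrow : ∀ n, ∀ᵐ ω ∂P, ∃ m : ℕ, ∑ k ∈ range (kk n), X n k ω = m ∧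
      ∀ z : ℝ, ∏ k ∈ range (kk n), (1 - (1 - z) * X n k ω) = z ^ m := fun n =>
    ((eventually_all_finset _).2 fun k hk => ae_eq_zero_or_eq_one_of_map_eq_bernoulliLaw
      (hmeas n k) (hlaw n k (mem_range.1 hk))).mono fun ω h =>
        exists_sum_eq_natCast_and_prod_eq_pow _ h
  refine TendstoInDistribution.congr_ae
    (X := fun n ω => (⌊∑ k ∈ range (kk n), X n k ω⌋₊ : ℝ)) ?_ fun n =>
      (hrow n).mono fun ω ⟨m, hsum, _⟩ => by simp only [hsum, Nat.floor_natCast]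
  refine tendstoInDistribution_poissonLaw_of_tendsto_integral_pow
    (fun n => (Finset.measurable_sum _ fun k _ => hmeas n k).nat_floor) hlam.le fun z hz => ?_
  refine (tendsto_integral_prod_one_sub_mul_of_associated hmeas hL2 hassoc hlaw h2b h2c h2d
    (c := 1 - z) ⟨by linarith [hz.2], by linarith [hz.1]⟩).congr fun n =>
      integral_congr_ae <| (hrow n).mono fun ω ⟨m, hsum, hprod⟩ => ?_
  simp only [hprod, hsum, Nat.floor_natCast]

/-- **Theorem 4.3 (conv_Bern_Pois_Gen).** Poisson CLT for a by-row associated array of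
(not necessarily stationary) Bernoulli variables. Indices within a row are 0-based:
`X n k` is `X_{k+1,n}`, and the block variable `X'_{h,j,n}` is `X n (j * ll n + h)`. -/
theorem stmt_4 {Ω : Type*} [MeasurableSpace Ω] (P : Measure Ω) [IsProbabilityMeasure P]
    (X : ℕ → ℕ → Ω → ℝ) (kk mm ll rr : ℕ → ℕ)
    (hmeas : ∀ n k, Measurable (X n k))
    (hL2 : ∀ n, ∀ k < kk n, MemLp (X n k) 2 P)
    (hk : Tendsto kk atTop atTop)
    (hdecomp : ∀ n, kk n = mm n * ll n + rr n)
    (hm1 : ∀ n, 1 ≤ mm n) (hm : Tendsto mm atTop atTop)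
    (hr : ∀ n, rr n < ll n)
    (hlm : Tendsto (fun n => (ll n : ℝ) / (mm n : ℝ)) atTop (𝓝 0))
    (p : ℕ → ℕ → ℝ) (lam : ℝ) (hlam : 0 < lam)
    (hassoc : ∀ n, AssociatedRVs P (fun i : Fin (kk n) => X n (i : ℕ)))
    (hlaw : ∀ n, ∀ k < kk n, Measure.map (X n k) P = bernoulliLaw (p n k))
    (h2a : Tendsto (fun n => ⨆ k ∈ Finset.range (kk n), p n k) atTop (𝓝 0))
    (h2b : Tendsto (fun n => ∑ k ∈ Finset.range (kk n), p n k) atTop (𝓝 lam))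
    (h2c : Tendsto (fun n => (kk n : ℝ) * (⨆ k ∈ Finset.range (kk n), p n k) ^ 2)
      atTop (𝓝 0))
    (h2d : Tendsto
      (fun n => (kk n : ℝ) ^ 2 *
        ⨆ r ∈ Finset.range (kk n), ⨆ s ∈ Finset.range (kk n), ⨆ _ : r ≠ s,
          rcov P (X n r) (X n s))
      atTop (𝓝 0))
    (h3 : Tendsto (fun n => ∑ h ∈ Finset.range (rr n), p n (mm n * ll n + h)) atTop (𝓝 0))
    (h4a : Tendsto
      (fun n => (mm n : ℝ) *
        ⨆ j ∈ Finset.range (mm n),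
          ∑ r ∈ Finset.range (ll n), ∑ s ∈ Finset.range (ll n),
            if r ≠ s then rcov P (X n (j * ll n + r)) (X n (j * ll n + s)) else 0)
      atTop (𝓝 0))
    (h4b : Tendsto
      (fun n => ∑ r ∈ Finset.range (rr n), ∑ s ∈ Finset.range (rr n),
        if r ≠ s then rcov P (X n (mm n * ll n + r)) (X n (mm n * ll n + s)) else 0)
      atTop (𝓝 0)) :
    TendstoInDistribution P (fun n ω => ∑ k ∈ Finset.range (kk n), X n k ω)
      (poissonLaw lam) :=
  stmt_4_general P X kk hmeas hL2 p lam hlam hassoc hlaw h2b h2c h2d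
end
end

section
/- Suppose each row (X_{1,n},…,X_{k(n),n}) of the array is centered, square-integrable, stationary and associated, and that k(n)·Var(X_{1,n}) → λ₁ for some λ₁ > 0 and 2·Σ_{j=2}^{k(n)} (k(n)−j+1)·Cov(X_{1,n}, X_{j,n}) → λ₂ for some λ₂ ≥ 0. Then Var(Y_n^*) → 0 as n → ∞; that is, condition (C1) holds automatically. (Subsection 3.1) -/
open MeasureTheory ProbabilityTheory Filter Finset Topology

noncomputable section

/-!
Since `Var(X - Y) ≥ 0`, each covariance is at most the mean of the two variances, so the
variance of a sum of `r` square-integrable terms is at most `r` times the sum of their variances.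
Stationarity makes every `X_{k,n}` distributed like `X_{1,n}`, hence
`Var(Y_n^*) ≤ r(n)² Var(X_{1,n})`. As `r < ℓ` and `mℓ ≤ k`, `r² ≤ (ℓ/m) k`, so
`Var(Y_n^*) ≤ (ℓ/m) · k Var(X_{1,n}) → 0 · λ₁`.
-/

namespace ProbabilityTheory

variable {Ω : Type*} [MeasurableSpace Ω] {μ : Measure Ω} [IsFiniteMeasure μ]

lemma covariance_le_half_variance_add {X Y : Ω → ℝ} (hX : MemLp X 2 μ) (hY : MemLp Y 2 μ) :
    cov[X, Y; μ] ≤ (Var[X; μ] + Var[Y; μ]) / 2 := by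
  have := variance_nonneg (X - Y) μ
  rw [variance_sub hX hY] at this
  linarith

lemma variance_fun_sum_le_card_mul_sum {ι : Type*} {s : Finset ι} {X : ι → Ω → ℝ}
    (hX : ∀ i ∈ s, MemLp (X i) 2 μ) :
    Var[fun ω ↦ ∑ i ∈ s, X i ω; μ] ≤ #s * ∑ i ∈ s, Var[X i; μ] := by
  rw [variance_fun_sum' hX]
  calc ∑ i ∈ s, ∑ j ∈ s, cov[X i, X j; μ]
      ≤ ∑ i ∈ s, ∑ j ∈ s, (Var[X i; μ] + Var[X j; μ]) / 2 :=
        sum_le_sum fun i hi ↦ sum_le_sum fun j hj ↦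
          covariance_le_half_variance_add (hX i hi) (hX j hj)
    _ = #s * ∑ i ∈ s, Var[X i; μ] := by
        simp only [add_div, sum_add_distrib, ← sum_div, sum_const, nsmul_eq_mul, ← mul_sum,
          sum_comm (f := fun i j ↦ Var[X j; μ])]
        ring

end ProbabilityTheory

namespace RowStationary

variable {Ω : Type*} [MeasurableSpace Ω] {P : Measure Ω} {K : ℕ} {X : ℕ → Ω → ℝ}

lemma identDistrib (hX : RowStationary P K X) (hmeas : ∀ k, Measurable (X k)) {t : ℕ}
    (ht : t < K) : IdentDistrib (X t) (X 0) P P := by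
  rcases Nat.eq_zero_or_pos t with rfl | ht0
  · exact IdentDistrib.refl (hmeas 0).aemeasurable
  · have hcoord : Measurable fun v : Fin 1 → ℝ ↦ v 0 := measurable_pi_apply 0
    have hshift : Measurable fun ω (i : Fin 1) ↦ X (t + i) ω :=
      measurable_pi_lambda _ fun _ ↦ hmeas _
    have hfirst : Measurable fun ω (i : Fin 1) ↦ X i ω := measurable_pi_lambda _ fun _ ↦ hmeas _
    have hlaw := congrArg (Measure.map fun v : Fin 1 → ℝ ↦ v 0) (hX 1 t ht0 (by omega))
    rw [Measure.map_map hcoord hshift, Measure.map_map hcoord hfirst] at hlaw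
    exact ⟨(hmeas t).aemeasurable, (hmeas 0).aemeasurable, hlaw⟩

lemma variance_fun_sum_range_le [IsFiniteMeasure P] (hX : RowStationary P K X)
    (hmeas : ∀ k, Measurable (X k)) (hL2 : ∀ k < K, MemLp (X k) 2 P) {a r : ℕ}
    (har : a + r ≤ K) :
    Var[fun ω ↦ ∑ h ∈ range r, X (a + h) ω; P] ≤ r ^ 2 * Var[X 0; P] := by
  have hidx : ∀ h ∈ range r, a + h < K := fun h hh ↦ by rw [mem_range] at hh; omega
  calc Var[fun ω ↦ ∑ h ∈ range r, X (a + h) ω; P]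
      ≤ #(range r) * ∑ h ∈ range r, Var[X (a + h); P] :=
        variance_fun_sum_le_card_mul_sum fun h hh ↦ hL2 _ (hidx h hh)
    _ = r ^ 2 * Var[X 0; P] := by
        rw [sum_congr rfl fun h hh ↦ (hX.identDistrib hmeas (hidx h hh)).variance_eq]
        simp only [sum_const, card_range, nsmul_eq_mul]
        ring

end RowStationary

lemma sq_le_div_mul_of_eq_mul_add {k m l r : ℕ} (hk : k = m * l + r) (hm : 0 < m)
    (hr : r ≤ l) : (r : ℝ) ^ 2 ≤ l / m * k := by
  have hm' : (0 : ℝ) < m := by exact_mod_cast hm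
  have hr' : (r : ℝ) ≤ l := by exact_mod_cast hr
  rw [div_mul_eq_mul_div, le_div_iff₀ hm', hk]
  push_cast
  have hsq : (r : ℝ) ^ 2 ≤ l ^ 2 := pow_le_pow_left₀ (Nat.cast_nonneg r) hr' 2
  nlinarith [mul_le_mul_of_nonneg_right hsq hm'.le, mul_nonneg (Nat.cast_nonneg (α := ℝ) l)
    (Nat.cast_nonneg (α := ℝ) r)]

theorem stmt_8_general {Ω : Type*} [MeasurableSpace Ω] (P : Measure Ω) [IsProbabilityMeasure P]
    (X : ℕ → ℕ → Ω → ℝ) (kk mm ll rr : ℕ → ℕ)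
    (hmeas : ∀ n k, Measurable (X n k))
    (hL2 : ∀ n, ∀ k < kk n, MemLp (X n k) 2 P)
    (hdecomp : ∀ n, kk n = mm n * ll n + rr n)
    (hm1 : ∀ n, 1 ≤ mm n)
    (hr : ∀ n, rr n < ll n)
    (hlm : Tendsto (fun n => (ll n : ℝ) / (mm n : ℝ)) atTop (𝓝 0))
    (lam1 : ℝ)
    (hstat : ∀ n, RowStationary P (kk n) (X n))
    (hvar1 : Tendsto (fun n => (kk n : ℝ) * variance (X n 0) P) atTop (𝓝 lam1)) :
    Tendsto
      (fun n => variance (fun ω => ∑ h ∈ Finset.range (rr n), X n (mm n * ll n + h) ω) P)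
      atTop (𝓝 0) := by
  have hbound : ∀ n,
      variance (fun ω => ∑ h ∈ Finset.range (rr n), X n (mm n * ll n + h) ω) P
        ≤ (ll n : ℝ) / mm n * ((kk n : ℝ) * variance (X n 0) P) := fun n ↦
    calc _ ≤ (rr n : ℝ) ^ 2 * variance (X n 0) P :=
          (hstat n).variance_fun_sum_range_le (hmeas n) (hL2 n) (hdecomp n).ge
      _ ≤ (ll n : ℝ) / mm n * kk n * variance (X n 0) P :=
          mul_le_mul_of_nonneg_right
            (sq_le_div_mul_of_eq_mul_add (hdecomp n) (hm1 n) (hr n).le) (variance_nonneg _ _)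
      _ = _ := mul_assoc _ _ _
  have hlim := hlm.mul hvar1
  rw [zero_mul] at hlim
  exact squeeze_zero (fun n ↦ variance_nonneg _ _) hbound hlim

/-- **Subsection 3.1.** For a centered, square-integrable, stationary and associated array
with `k(n)·Var(X_{1,n}) → λ₁ > 0` and `2·∑_{j=2}^{k(n)} (k(n)-j+1)·Cov(X_{1,n},X_{j,n}) → λ₂ ≥ 0`,
the variance of the remainder `Y_n^* = ∑_{h < r(n)} X n (m(n)ℓ(n)+h)` tends to `0`
(condition (C1) holds automatically). Indices within rows are 0-based. -/
theorem stmt_8 {Ω : Type*} [MeasurableSpace Ω] (P : Measure Ω) [IsProbabilityMeasure P]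
    (X : ℕ → ℕ → Ω → ℝ) (kk mm ll rr : ℕ → ℕ)
    (hmeas : ∀ n k, Measurable (X n k))
    (hL2 : ∀ n, ∀ k < kk n, MemLp (X n k) 2 P)
    (hk : Tendsto kk atTop atTop)
    (hdecomp : ∀ n, kk n = mm n * ll n + rr n)
    (hm1 : ∀ n, 1 ≤ mm n) (hm : Tendsto mm atTop atTop)
    (hr : ∀ n, rr n < ll n)
    (hlm : Tendsto (fun n => (ll n : ℝ) / (mm n : ℝ)) atTop (𝓝 0))
    (lam1 lam2 : ℝ) (hlam1 : 0 < lam1) (hlam2 : 0 ≤ lam2)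
    (hcent : ∀ n, ∀ k < kk n, ∫ ω, X n k ω ∂P = 0)
    (hstat : ∀ n, RowStationary P (kk n) (X n))
    (hassoc : ∀ n, AssociatedRVs P (fun i : Fin (kk n) => X n (i : ℕ)))
    (hvar1 : Tendsto (fun n => (kk n : ℝ) * variance (X n 0) P) atTop (𝓝 lam1))
    (hvar2 : Tendsto
      (fun n => 2 * ∑ j ∈ Finset.Ico 1 (kk n), ((kk n : ℝ) - j) * rcov P (X n 0) (X n j))
      atTop (𝓝 lam2)) :
    Tendsto
      (fun n => variance (fun ω => ∑ h ∈ Finset.range (rr n), X n (mm n * ll n + h) ω) P)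
      atTop (𝓝 0) :=
  stmt_8_general P X kk mm ll rr hmeas hL2 hdecomp hm1 hr hlm lam1 hstat hvar1
end
end

section
/- Suppose each row (X_{1,n},…,X_{k(n),n}) of the array is centered and associated. If (i) there is a constant c > 0 with Var(S_n[X]) ≤ c for all n (condition BVH[X]), and (ii) for every ε > 0, ℓ(n) · sup_{1≤k≤k(n)} P(|X_{k,n}| ≥ ε/ℓ(n)) → 0 as n → ∞, then: Σ_{j=1}^{m(n)} Var(Y_{j,n}) ≤ c for all n (condition BVH[T], since Var(S_{m(n)}[T]) = Σ_j Var(Y_{j,n})), and for every ε > 0, sup_{1≤j≤m(n)} P(|Y_{j,n}| ≥ ε) → 0 as n → ∞ (condition UAN[T]). (Corollary 2.1, part (1)) -/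
open MeasureTheory ProbabilityTheory Filter Finset Topology
open scoped ENNReal NNReal

noncomputable section

/-
Associated variables are pairwise nonnegatively correlated: apply the definition to the
monotone, bounded truncations `max (-M) (min M ·)` of two coordinates and let `M → ∞` by
dominated convergence. Hence the variance of a sum of associated variables dominates the sum of
the variances of any partition of it into disjoint blocks, which transfers the bound BVH[X] to
the independent block copies. For UAN[T], a block of `ℓ` summands can only reach `ε` if one of
its summands reaches `ε / ℓ`, so a union bound gives
`sup_j P(|Y_j| ≥ ε) ≤ ℓ · sup_k P(|X_k| ≥ ε / ℓ)`.
-/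

def clip (M t : ℝ) : ℝ := max (-M) (min M t)

section Clip

variable {M : ℝ}

lemma monotone_clip (M : ℝ) : Monotone (clip M) := fun _ _ hab =>
  max_le_max le_rfl (min_le_min le_rfl hab)

lemma continuous_clip (M : ℝ) : Continuous (clip M) :=
  continuous_const.max (continuous_const.min continuous_id)

lemma abs_clip_le (hM : 0 ≤ M) (t : ℝ) : |clip M t| ≤ M := by
  rw [abs_le, clip]
  exact ⟨le_max_left _ _, max_le (by linarith) (min_le_left _ _)⟩

lemma abs_clip_le_abs (hM : 0 ≤ M) (t : ℝ) : |clip M t| ≤ |t| := by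
  rw [abs_le, clip]
  constructor
  · rcases le_total 0 t with ht | ht
    · exact le_max_of_le_right
        (le_min (by linarith [abs_nonneg t]) (by linarith [abs_of_nonneg ht]))
    · rw [abs_of_nonpos ht, neg_neg]
      exact le_max_of_le_right (le_min (ht.trans hM) le_rfl)
  · exact max_le (by linarith [abs_nonneg t]) ((min_le_right _ _).trans (le_abs_self t))

lemma clip_of_abs_le {t : ℝ} (h : |t| ≤ M) : clip M t = t := by
  rw [abs_le] at h
  rw [clip, min_eq_right h.2, max_eq_right h.1]

lemma tendsto_clip (t : ℝ) : Tendsto (fun M : ℕ => clip M t) atTop (𝓝 t) := by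
  refine tendsto_const_nhds.congr' ?_
  filter_upwards [eventually_ge_atTop ⌈|t|⌉₊] with M hM
  exact (clip_of_abs_le ((Nat.le_ceil _).trans (by exact_mod_cast hM))).symm

end Clip

section Truncation

variable {Ω : Type*} [MeasurableSpace Ω] {P : Measure Ω} {f g : Ω → ℝ}

lemma tendsto_integral_clip (hf : Integrable f P) :
    Tendsto (fun M : ℕ => ∫ ω, clip M (f ω) ∂P) atTop (𝓝 (∫ ω, f ω ∂P)) :=
  tendsto_integral_of_dominated_convergence (fun ω => |f ω|)
    (fun M => (continuous_clip M).comp_aestronglyMeasurable hf.aestronglyMeasurable)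
    hf.abs (fun M => ae_of_all _ fun _ => abs_clip_le_abs M.cast_nonneg _)
    (ae_of_all _ fun ω => tendsto_clip (f ω))

lemma tendsto_integral_clip_mul_clip (hf : AEStronglyMeasurable f P)
    (hg : AEStronglyMeasurable g P) (hfg : Integrable (fun ω => f ω * g ω) P) :
    Tendsto (fun M : ℕ => ∫ ω, clip M (f ω) * clip M (g ω) ∂P) atTop
      (𝓝 (∫ ω, f ω * g ω ∂P)) :=
  tendsto_integral_of_dominated_convergence (fun ω => |f ω * g ω|)
    (fun M => ((continuous_clip M).comp_aestronglyMeasurable hf).mul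
      ((continuous_clip M).comp_aestronglyMeasurable hg))
    hfg.abs
    (fun M => ae_of_all _ fun ω => by
      rw [Real.norm_eq_abs, abs_mul, abs_mul]
      exact mul_le_mul (abs_clip_le_abs M.cast_nonneg _) (abs_clip_le_abs M.cast_nonneg _)
        (abs_nonneg _) (abs_nonneg _))
    (ae_of_all _ fun ω => (tendsto_clip (f ω)).mul (tendsto_clip (g ω)))

lemma tendsto_rcov_clip [IsProbabilityMeasure P] (hf : MemLp f 2 P) (hg : MemLp g 2 P) :
    Tendsto (fun M : ℕ => rcov P (fun ω => clip M (f ω)) (fun ω => clip M (g ω))) atTop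
      (𝓝 (rcov P f g)) :=
  (tendsto_integral_clip_mul_clip hf.aestronglyMeasurable hg.aestronglyMeasurable
    (hf.integrable_mul hg)).sub
    ((tendsto_integral_clip (hf.integrable one_le_two)).mul
      (tendsto_integral_clip (hg.integrable one_le_two)))

lemma rcov_eq_covariance_s17 [IsProbabilityMeasure P] (hf : MemLp f 2 P) (hg : MemLp g 2 P) :
    rcov P f g = cov[f, g; P] :=
  (covariance_eq_sub hf hg).symm

end Truncation

theorem AssociatedRVs.covariance_nonneg_s17 {Ω : Type*} [MeasurableSpace Ω] {P : Measure Ω}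
    [IsProbabilityMeasure P] {m : ℕ} {X : Fin m → Ω → ℝ} (hX : AssociatedRVs P X)
    (hL2 : ∀ i, MemLp (X i) 2 P) (i j : Fin m) : 0 ≤ cov[X i, X j; P] := by
  have hclip : ∀ M : ℕ, 0 ≤ rcov P (fun ω => clip M (X i ω)) (fun ω => clip M (X j ω)) :=
    fun M => hX (fun x => clip M (x i)) (fun x => clip M (x j))
      ((continuous_clip M).measurable.comp (measurable_pi_apply i))
      ((continuous_clip M).measurable.comp (measurable_pi_apply j))
      ⟨M, fun x => abs_clip_le M.cast_nonneg _⟩ ⟨M, fun x => abs_clip_le M.cast_nonneg _⟩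
      (fun _ _ hab => monotone_clip M (hab i)) (fun _ _ hab => monotone_clip M (hab j))
  rw [← rcov_eq_covariance_s17 (hL2 i) (hL2 j)]
  exact ge_of_tendsto' (tendsto_rcov_clip (hL2 i) (hL2 j)) hclip

theorem Finset.sum_sum_sum_le_sum_sum_of_pairwiseDisjoint {ι κ M : Type*} [AddCommMonoid M]
    [PartialOrder M] [IsOrderedAddMonoid M] [DecidableEq ι] {t : Finset κ} {s : κ → Finset ι}
    {u : Finset ι} (hdisj : (t : Set κ).PairwiseDisjoint s) (hsub : ∀ j ∈ t, s j ⊆ u)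
    {c : ι → ι → M} (hc : ∀ a ∈ u, ∀ b ∈ u, 0 ≤ c a b) :
    ∑ j ∈ t, ∑ a ∈ s j, ∑ b ∈ s j, c a b ≤ ∑ a ∈ u, ∑ b ∈ u, c a b := by
  have hU : t.biUnion s ⊆ u := biUnion_subset.mpr hsub
  calc ∑ j ∈ t, ∑ a ∈ s j, ∑ b ∈ s j, c a b
      ≤ ∑ j ∈ t, ∑ a ∈ s j, ∑ b ∈ u, c a b :=
        sum_le_sum fun j hj => sum_le_sum fun a ha => sum_le_sum_of_subset_of_nonneg (hsub j hj)
          fun b hb _ => hc a (hsub j hj ha) b hb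
    _ = ∑ a ∈ t.biUnion s, ∑ b ∈ u, c a b := (sum_biUnion hdisj).symm
    _ ≤ ∑ a ∈ u, ∑ b ∈ u, c a b :=
        sum_le_sum_of_subset_of_nonneg hU fun a ha _ => sum_nonneg fun b hb => hc a ha b hb

lemma Nat.mul_add_lt_of_lt_of_le {j m l h K : ℕ} (hj : j < m) (hh : h < l) (hK : m * l ≤ K) :
    j * l + h < K :=
  calc j * l + h < (j + 1) * l := by rw [add_one_mul]; omega
    _ ≤ m * l := Nat.mul_le_mul_right _ hj
    _ ≤ K := hK

lemma pairwiseDisjoint_image_mul_add_range (l : ℕ) (t : Set ℕ) :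
    t.PairwiseDisjoint fun j => (range l).image (j * l + ·) := by
  intro j₁ _ j₂ _ hne
  refine disjoint_left.mpr fun a ha₁ ha₂ => hne ?_
  simp only [mem_image, mem_range] at ha₁ ha₂
  obtain ⟨h₁, hh₁, rfl⟩ := ha₁
  obtain ⟨h₂, hh₂, heq⟩ := ha₂
  have hl : 0 < l := (Nat.zero_le _).trans_lt hh₁
  have hdiv : ∀ j h, h < l → (j * l + h) / l = j := fun j h hh => by
    rw [mul_comm, Nat.mul_add_div hl, Nat.div_eq_of_lt hh, add_zero]
  rw [← hdiv j₁ h₁ hh₁, ← heq, hdiv j₂ h₂ hh₂]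

section Blocks

variable {Ω : Type*} [MeasurableSpace Ω] {P : Measure Ω} {K m l : ℕ}

theorem sum_variance_blocks_le [IsProbabilityMeasure P] (hK : m * l ≤ K) {X : ℕ → Ω → ℝ}
    (hL2 : ∀ k < K, MemLp (X k) 2 P) (hX : AssociatedRVs P (fun i : Fin K => X i)) :
    ∑ j ∈ range m, Var[fun ω => ∑ h ∈ range l, X (j * l + h) ω; P]
      ≤ Var[fun ω => ∑ k ∈ range K, X k ω; P] := by
  set s : ℕ → Finset ℕ := fun j => (range l).image (j * l + ·)
  have hsub : ∀ j ∈ range m, s j ⊆ range K := fun j hj a ha => by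
    obtain ⟨h, hh, rfl⟩ := mem_image.mp ha
    exact mem_range.mpr (Nat.mul_add_lt_of_lt_of_le (mem_range.mp hj) (mem_range.mp hh) hK)
  have hL2' : ∀ k ∈ range K, MemLp (X k) 2 P := fun k hk => hL2 k (mem_range.mp hk)
  have hblock : ∀ j ∈ range m, Var[fun ω => ∑ h ∈ range l, X (j * l + h) ω; P]
      = ∑ a ∈ s j, ∑ b ∈ s j, cov[X a, X b; P] := fun j hj => by
    rw [← variance_fun_sum' (X := X) fun a ha => hL2' a (hsub j hj ha)]
    congr 1
    funext ω
    exact (sum_image (f := fun a => X a ω) fun _ _ _ _ => Nat.add_left_cancel).symm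
  rw [sum_congr rfl hblock, variance_fun_sum' hL2']
  exact sum_sum_sum_le_sum_sum_of_pairwiseDisjoint (pairwiseDisjoint_image_mul_add_range l _)
    hsub fun a ha b hb => hX.covariance_nonneg_s17 (fun i => hL2 i i.isLt)
      ⟨a, mem_range.mp ha⟩ ⟨b, mem_range.mp hb⟩

lemma measure_le_abs_sum_le_sum {ι : Type*} (μ : Measure Ω) (s : Finset ι)
    (f : ι → Ω → ℝ)
    {ε : ℝ} (hε : 0 < ε) :
    μ {ω | ε ≤ |∑ i ∈ s, f i ω|} ≤ ∑ i ∈ s, μ {ω | ε / #s ≤ |f i ω|} := by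
  refine (measure_mono fun ω (hω : ε ≤ _) => ?_).trans (measure_biUnion_finset_le s _)
  have hs : s.Nonempty := by
    by_contra hs
    rw [not_nonempty_iff_eq_empty.mp hs, sum_empty, abs_zero] at hω
    exact hε.not_ge hω
  have hsum : ∑ _i ∈ s, ε / #s ≤ ∑ i ∈ s, |f i ω| := by
    rw [sum_const, nsmul_eq_mul, mul_div_cancel₀ _ (by exact_mod_cast hs.card_pos.ne')]
    exact hω.trans (abs_sum_le_sum_abs _ _)
  obtain ⟨i, hi, hle⟩ := exists_le_of_sum_le hs hsum
  exact Set.mem_biUnion hi hle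

lemma iSup_measure_block_le (hK : m * l ≤ K) (X : ℕ → Ω → ℝ) {ε : ℝ} (hε : 0 < ε) :
    ⨆ j ∈ range m, P {ω | ε ≤ |∑ h ∈ range l, X (j * l + h) ω|}
      ≤ l * ⨆ k ∈ range K, P {ω | ε / l ≤ |X k ω|} := by
  refine iSup₂_le fun j hj => (measure_le_abs_sum_le_sum P _ _ hε).trans ?_
  rw [card_range]
  calc ∑ h ∈ range l, P {ω | ε / l ≤ |X (j * l + h) ω|}
      ≤ ∑ _h ∈ range l, ⨆ k ∈ range K, P {ω | ε / l ≤ |X k ω|} :=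
        sum_le_sum fun h hh => le_iSup₂ (f := fun k _ => P {ω | ε / l ≤ |X k ω|}) (j * l + h)
          (mem_range.mpr (Nat.mul_add_lt_of_lt_of_le (mem_range.mp hj) (mem_range.mp hh) hK))
    _ = l * ⨆ k ∈ range K, P {ω | ε / l ≤ |X k ω|} := by
        rw [sum_const, card_range, nsmul_eq_mul]

end Blocks

theorem stmt_17_general {Ω : Type*} [MeasurableSpace Ω] (P : Measure Ω) [IsProbabilityMeasure P]
    (X : ℕ → ℕ → Ω → ℝ) (kk mm ll rr : ℕ → ℕ)
    (hL2 : ∀ n, ∀ k < kk n, MemLp (X n k) 2 P)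
    (hdecomp : ∀ n, kk n = mm n * ll n + rr n)
    (c : ℝ)
    (hassoc : ∀ n, AssociatedRVs P (fun i : Fin (kk n) => X n (i : ℕ)))
    (hBVH : ∀ n, variance (fun ω => ∑ k ∈ Finset.range (kk n), X n k ω) P ≤ c)
    (hUANX : ∀ ε > (0 : ℝ), Tendsto
      (fun n => (ll n : ℝ≥0∞) *
        ⨆ k ∈ Finset.range (kk n), P {ω | ε / (ll n : ℝ) ≤ |X n k ω|})
      atTop (𝓝 0)) :
    (∀ n, ∑ j ∈ Finset.range (mm n),
        variance (fun ω => ∑ h ∈ Finset.range (ll n), X n (j * ll n + h) ω) P ≤ c) ∧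
    ∀ ε > (0 : ℝ), Tendsto
      (fun n => ⨆ j ∈ Finset.range (mm n),
        P {ω | ε ≤ abs (∑ h ∈ Finset.range (ll n), X n (j * ll n + h) ω)})
      atTop (𝓝 0) := by
  have hK : ∀ n, mm n * ll n ≤ kk n := fun n => (hdecomp n).symm ▸ Nat.le_add_right _ _
  refine ⟨fun n => (sum_variance_blocks_le (hK n) (hL2 n) (hassoc n)).trans (hBVH n),
    fun ε hε => ?_⟩
  exact tendsto_of_tendsto_of_tendsto_of_le_of_le tendsto_const_nhds (hUANX ε hε)
    (fun _ => bot_le) fun n => iSup_measure_block_le (hK n) (X n) hε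

/-- **Corollary 2.1, part (1).** For a centered, square-integrable, by-row associated array:
if `Var(S_n[X]) ≤ c` for all `n` (BVH[X]) and
`ℓ(n) · sup_{k<k(n)} P(|X_{k,n}| ≥ ε/ℓ(n)) → 0` for every `ε > 0`, then
`∑_{j<m(n)} Var(Y_{j,n}) ≤ c` for all `n` (BVH[T], since
`Var(S_{m(n)}[T]) = ∑_j Var(Y_{j,n})`), and `sup_{j<m(n)} P(|Y_{j,n}| ≥ ε) → 0`
for every `ε > 0` (UAN[T]). Indices within rows are 0-based, and
`Y_{j,n} = ∑_{h<ℓ(n)} X n (j·ℓ(n)+h)`. -/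
theorem stmt_17 {Ω : Type*} [MeasurableSpace Ω] (P : Measure Ω) [IsProbabilityMeasure P]
    (X : ℕ → ℕ → Ω → ℝ) (kk mm ll rr : ℕ → ℕ)
    (hmeas : ∀ n k, Measurable (X n k))
    (hL2 : ∀ n, ∀ k < kk n, MemLp (X n k) 2 P)
    (hk : Tendsto kk atTop atTop)
    (hdecomp : ∀ n, kk n = mm n * ll n + rr n)
    (hm1 : ∀ n, 1 ≤ mm n) (hm : Tendsto mm atTop atTop)
    (hr : ∀ n, rr n < ll n)
    (hlm : Tendsto (fun n => (ll n : ℝ) / (mm n : ℝ)) atTop (𝓝 0))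
    (c : ℝ) (hc : 0 < c)
    (hcent : ∀ n, ∀ k < kk n, ∫ ω, X n k ω ∂P = 0)
    (hassoc : ∀ n, AssociatedRVs P (fun i : Fin (kk n) => X n (i : ℕ)))
    (hBVH : ∀ n, variance (fun ω => ∑ k ∈ Finset.range (kk n), X n k ω) P ≤ c)
    (hUANX : ∀ ε > (0 : ℝ), Tendsto
      (fun n => (ll n : ℝ≥0∞) *
        ⨆ k ∈ Finset.range (kk n), P {ω | ε / (ll n : ℝ) ≤ |X n k ω|})
      atTop (𝓝 0)) :
    (∀ n, ∑ j ∈ Finset.range (mm n),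
        variance (fun ω => ∑ h ∈ Finset.range (ll n), X n (j * ll n + h) ω) P ≤ c) ∧
    ∀ ε > (0 : ℝ), Tendsto
      (fun n => ⨆ j ∈ Finset.range (mm n),
        P {ω | ε ≤ abs (∑ h ∈ Finset.range (ll n), X n (j * ll n + h) ω)})
      atTop (𝓝 0) :=
  stmt_17_general P X kk mm ll rr hL2 hdecomp c hassoc hBVH hUANX
end
end

section
/- Let k(n) → ∞ and for each n let q_{1,n}, …, q_{k(n),n} ∈ [0,1). Write q̄_n = sup_{1≤k≤k(n)} q_{k,n}. Assume q̄_n → 0, Σ_{k=1}^{k(n)} q_{k,n} → λ for some λ > 0, and k(n)·q̄_n² → 0. Then for every u ∈ ℝ, ∏_{k=1}^{k(n)} (1 − q_{k,n})/(1 − q_{k,n} e^{iu}) → exp(λ(e^{iu} − 1)) as n → ∞. (Convergence of the product of corrected-geometric characteristic functions to the Poisson characteristic function, proof of Theorem 4.4) -/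
open MeasureTheory ProbabilityTheory Filter Finset Topology
open scoped ENNReal NNReal

noncomputable section

/-!
Each factor is `(1 - q) / (1 - q z) = exp (log (1 - q) - log (1 - q z))` with `z = e^{iu}`, and
`log (1 - w) = -w + O(‖w‖²)` for `‖w‖ ≤ 1/2` turns the exponent into `q (z - 1) + O(q²)`.
Summed over the row, the exponent of the product is `(∑ q) (z - 1)` up to `2 k(n) q̄ₙ²`, which
tends to `0`, while `∑ q → λ`.
-/

theorem Finset.le_ciSup₂_of_mem {ι α : Type*} [ConditionallyCompleteLattice α] {s : Finset ι}
    (f : ι → α) {i : ι} (hi : i ∈ s) : f i ≤ ⨆ j ∈ s, f j := by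
  refine le_ciSup₂ (f := fun j (_ : j ∈ s) => f j) ((s.finite_toSet.image f).bddAbove.mono ?_) i hi
  rintro _ ⟨_, ⟨j, rfl⟩, ⟨hj, rfl⟩⟩
  exact ⟨j, hj, rfl⟩

namespace Complex

theorem norm_log_one_sub_add_self_le {w : ℂ} (hw : ‖w‖ ≤ 1 / 2) :
    ‖log (1 - w) + w‖ ≤ ‖w‖ ^ 2 := by
  have h := norm_log_one_add_sub_self_le (z := -w) (by rw [norm_neg]; linarith)
  rw [norm_neg, ← sub_eq_add_neg, sub_neg_eq_add] at h
  have hinv : (1 - ‖w‖)⁻¹ ≤ 2 := by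
    rw [inv_le_comm₀ (by linarith) two_pos]; linarith
  calc ‖log (1 - w) + w‖ ≤ ‖w‖ ^ 2 * (1 - ‖w‖)⁻¹ / 2 := h
    _ ≤ ‖w‖ ^ 2 * 2 / 2 := by gcongr
    _ = ‖w‖ ^ 2 := by ring

theorem norm_log_one_sub_sub_log_one_sub_mul_le {w z : ℂ} (hw : ‖w‖ ≤ 1 / 2) (hz : ‖z‖ ≤ 1) :
    ‖log (1 - w) - log (1 - w * z) - w * (z - 1)‖ ≤ 2 * ‖w‖ ^ 2 := by
  have hwz : ‖w * z‖ ≤ ‖w‖ := by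
    rw [norm_mul]; exact mul_le_of_le_one_right (norm_nonneg w) hz
  calc ‖log (1 - w) - log (1 - w * z) - w * (z - 1)‖
      = ‖(log (1 - w) + w) - (log (1 - w * z) + w * z)‖ := by ring_nf
    _ ≤ ‖w‖ ^ 2 + ‖w * z‖ ^ 2 :=
      norm_sub_le_of_le (norm_log_one_sub_add_self_le hw)
        (norm_log_one_sub_add_self_le (hwz.trans hw))
    _ ≤ 2 * ‖w‖ ^ 2 := by nlinarith [norm_nonneg (w * z)]

theorem exp_log_one_sub_sub_log_one_sub_mul {w z : ℂ} (hw : ‖w‖ < 1) (hz : ‖z‖ ≤ 1) :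
    exp (log (1 - w) - log (1 - w * z)) = (1 - w) / (1 - w * z) := by
  have hwz : ‖w * z‖ < 1 := by
    rw [norm_mul]; exact (mul_le_of_le_one_right (norm_nonneg w) hz).trans_lt hw
  have one_sub_ne_zero {v : ℂ} (hv : ‖v‖ < 1) : 1 - v ≠ 0 :=
    sub_ne_zero.mpr fun h => by simp [← h] at hv
  rw [exp_sub, exp_log (one_sub_ne_zero hw), exp_log (one_sub_ne_zero hwz)]

variable {ι : Type*}

theorem norm_sum_log_one_sub_sub_log_one_sub_mul_le {s : Finset ι} {w : ι → ℂ} {z : ℂ} {r : ℝ}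
    (hw : ∀ k ∈ s, ‖w k‖ ≤ r) (hr : r ≤ 1 / 2) (hz : ‖z‖ ≤ 1) :
    ‖∑ k ∈ s, (log (1 - w k) - log (1 - w k * z)) - (∑ k ∈ s, w k) * (z - 1)‖
      ≤ 2 * (s.card * r ^ 2) := by
  rw [Finset.sum_mul, ← Finset.sum_sub_distrib]
  calc ‖∑ k ∈ s, (log (1 - w k) - log (1 - w k * z) - w k * (z - 1))‖
      ≤ ∑ k ∈ s, ‖log (1 - w k) - log (1 - w k * z) - w k * (z - 1)‖ := norm_sum_le _ _
    _ ≤ ∑ _k ∈ s, 2 * r ^ 2 := Finset.sum_le_sum fun k hk =>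
      (norm_log_one_sub_sub_log_one_sub_mul_le ((hw k hk).trans hr) hz).trans <| by
        gcongr; exact hw k hk
    _ = 2 * (s.card * r ^ 2) := by rw [Finset.sum_const, nsmul_eq_mul]; ring

theorem tendsto_prod_one_sub_div_one_sub_mul {s : ℕ → Finset ι} {w : ℕ → ι → ℂ} {r : ℕ → ℝ}
    {L z : ℂ} (hz : ‖z‖ ≤ 1) (hw : ∀ n, ∀ k ∈ s n, ‖w n k‖ ≤ r n)
    (hr : Tendsto r atTop (𝓝 0)) (hsum : Tendsto (fun n => ∑ k ∈ s n, w n k) atTop (𝓝 L))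
    (hsq : Tendsto (fun n => ((s n).card : ℝ) * r n ^ 2) atTop (𝓝 0)) :
    Tendsto (fun n => ∏ k ∈ s n, (1 - w n k) / (1 - w n k * z)) atTop
      (𝓝 (exp (L * (z - 1)))) := by
  set S := fun n => ∑ k ∈ s n, (log (1 - w n k) - log (1 - w n k * z))
  have hr_small : ∀ᶠ n in atTop, r n ≤ 1 / 2 := hr.eventually (eventually_le_nhds (by norm_num))
  have hprod : ∀ᶠ n in atTop, exp (S n) = ∏ k ∈ s n, (1 - w n k) / (1 - w n k * z) := by
    filter_upwards [hr_small] with n hn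
    rw [exp_sum]
    exact Finset.prod_congr rfl fun k hk =>
      exp_log_one_sub_sub_log_one_sub_mul (by linarith [hw n k hk]) hz
  have hS_sub : Tendsto (fun n => S n - (∑ k ∈ s n, w n k) * (z - 1)) atTop (𝓝 0) := by
    refine squeeze_zero_norm' ?_ (by simpa using hsq.const_mul 2)
    filter_upwards [hr_small] with n hn
    exact norm_sum_log_one_sub_sub_log_one_sub_mul_le (hw n) hn hz
  have hS : Tendsto S atTop (𝓝 (L * (z - 1))) := by
    simpa using hS_sub.add (hsum.mul_const (z - 1))
  exact ((continuous_exp.tendsto _).comp hS).congr' hprod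

end Complex

theorem stmt_19_general (kk : ℕ → ℕ)
    (q : ℕ → ℕ → ℝ) (lam : ℝ)
    (hq01 : ∀ n, ∀ k < kk n, 0 ≤ q n k ∧ q n k < 1)
    (hbar : Tendsto (fun n => ⨆ k ∈ Finset.range (kk n), q n k) atTop (𝓝 0))
    (hsum : Tendsto (fun n => ∑ k ∈ Finset.range (kk n), q n k) atTop (𝓝 lam))
    (hsq : Tendsto (fun n => (kk n : ℝ) * (⨆ k ∈ Finset.range (kk n), q n k) ^ 2)
      atTop (𝓝 0)) :
    ∀ u : ℝ, Tendsto
      (fun n => ∏ k ∈ Finset.range (kk n),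
        ((1 - (q n k : ℂ)) / (1 - (q n k : ℂ) * Complex.exp ((u : ℂ) * Complex.I))))
      atTop (𝓝 (Complex.exp ((lam : ℂ) * (Complex.exp ((u : ℂ) * Complex.I) - 1)))) := by
  intro u
  have hleQ : ∀ n, ∀ k ∈ Finset.range (kk n), ‖(q n k : ℂ)‖ ≤ ⨆ k ∈ Finset.range (kk n), q n k :=
    fun n k hk => by
      rw [Complex.norm_of_nonneg (hq01 n k (Finset.mem_range.mp hk)).1]
      exact Finset.le_ciSup₂_of_mem (q n) hk
  refine Complex.tendsto_prod_one_sub_div_one_sub_mul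
    (Complex.norm_exp_ofReal_mul_I u).le hleQ hbar ?_ (by simpa using hsq)
  simpa only [Function.comp_def, Complex.ofReal_sum] using
    (Complex.continuous_ofReal.tendsto lam).comp hsum

/-- **Proof of Theorem 4.4 (corrected-geometric products).** If
`q̄_n = sup_{k<k(n)} q_{k,n} → 0`, `∑_{k<k(n)} q_{k,n} → λ > 0` and `k(n)·q̄_n² → 0`,
then for every `u ∈ ℝ`,
`∏_{k<k(n)} (1 − q_{k,n})/(1 − q_{k,n} e^{iu}) → exp(λ(e^{iu} − 1))`. -/
theorem stmt_19 (kk : ℕ → ℕ) (hk : Tendsto kk atTop atTop)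
    (q : ℕ → ℕ → ℝ) (lam : ℝ) (hlam : 0 < lam)
    (hq01 : ∀ n, ∀ k < kk n, 0 ≤ q n k ∧ q n k < 1)
    (hbar : Tendsto (fun n => ⨆ k ∈ Finset.range (kk n), q n k) atTop (𝓝 0))
    (hsum : Tendsto (fun n => ∑ k ∈ Finset.range (kk n), q n k) atTop (𝓝 lam))
    (hsq : Tendsto (fun n => (kk n : ℝ) * (⨆ k ∈ Finset.range (kk n), q n k) ^ 2)
      atTop (𝓝 0)) :
    ∀ u : ℝ, Tendsto
      (fun n => ∏ k ∈ Finset.range (kk n),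
        ((1 - (q n k : ℂ)) / (1 - (q n k : ℂ) * Complex.exp ((u : ℂ) * Complex.I))))
      atTop (𝓝 (Complex.exp ((lam : ℂ) * (Complex.exp ((u : ℂ) * Complex.I) - 1)))) :=
  stmt_19_general kk q lam hq01 hbar hsum hsq
end
end
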